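/- Let A = (Q, ι, δ, F) be an NBA over a finite alphabet Σ in which every SCC is inherently weak (a weak Büchi automaton). Then for every infinite word w : ℕ → Σ, w ∈ L(A) if and only if, in the inherently-weak-SCC construction for w (with W = Q), O_ℓ = ∅ for only finitely many ℓ ∈ ℕ. Moreover at most 3^{|Q|} distinct pairs (P_ℓ, O_ℓ) occur, so this yields a deterministic automaton equivalent to A with at most 3^{|Q|} states. -/

import Mathlib

open scoped Classical

/-- A nondeterministic Büchi automaton with state type `Q` and alphabet `A`:
an initial state, a transition relation (given as `trans : Q → A → Set Q`),
and a set `acc` of accepting transitions, which must be transitions of the automaton. -/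
structure NBA (Q A : Type) where
  init : Q
  trans : Q → A → Set Q
  acc : Set (Q × A × Q)
  acc_sub : ∀ t ∈ acc, t.2.2 ∈ trans t.1 t.2.1

namespace NBA

variable {Q A : Type}

/-- `ρ` is a run of the NBA `M` over the infinite word `w`. -/
def IsRun (M : NBA Q A) (w : ℕ → A) (ρ : ℕ → Q) : Prop :=
  ρ 0 = M.init ∧ ∀ ℓ : ℕ, ρ (ℓ + 1) ∈ M.trans (ρ ℓ) (w ℓ)

/-- `ρ` is an accepting run of `M` over `w`: a run taking accepting transitions
infinitely often. -/
def IsAcceptingRun (M : NBA Q A) (w : ℕ → A) (ρ : ℕ → Q) : Prop :=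
  M.IsRun w ρ ∧ ∀ n : ℕ, ∃ ℓ ≥ n, (ρ ℓ, w ℓ, ρ (ℓ + 1)) ∈ M.acc

/-- `w` is in the language of `M`. -/
def InLanguage (M : NBA Q A) (w : ℕ → A) : Prop :=
  ∃ ρ : ℕ → Q, M.IsAcceptingRun w ρ

/-- `q'` is reachable from `q` (via a finite, possibly empty, word). -/
def Reach (M : NBA Q A) : Q → Q → Prop :=
  Relation.ReflTransGen fun q q' => ∃ a : A, q' ∈ M.trans q a

/-- `C` is a strongly connected component: any two of its states are mutually
reachable, and it is maximal with this property. -/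
def IsSCC (M : NBA Q A) (C : Set Q) : Prop :=
  (∀ q ∈ C, ∀ q' ∈ C, M.Reach q q' ∧ M.Reach q' q) ∧
  ∀ C' : Set Q, C ⊆ C' → (∀ q ∈ C', ∀ q' ∈ C', M.Reach q q' ∧ M.Reach q' q) → C' = C

/-- An SCC is accepting if it contains an accepting transition. -/
def AccSCC (M : NBA Q A) (C : Set Q) : Prop :=
  ∃ q ∈ C, ∃ a : A, ∃ q' ∈ C, (q, a, q') ∈ M.acc

/-- A cycle through `C`: a nonempty finite sequence of transitions within
`C × A × C` starting and ending at the same state. -/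
def IsCycle (M : NBA Q A) (C : Set Q) (n : ℕ) (p : ℕ → Q) (u : ℕ → A) : Prop :=
  1 ≤ n ∧ p n = p 0 ∧ ∀ i < n, p i ∈ C ∧ p (i + 1) ∈ C ∧ p (i + 1) ∈ M.trans (p i) (u i)

/-- The cycle visits an accepting transition. -/
def CycleHasAcc (M : NBA Q A) (n : ℕ) (p : ℕ → Q) (u : ℕ → A) : Prop :=
  ∃ i < n, (p i, u i, p (i + 1)) ∈ M.acc

/-- `C` is inherently weak: either every cycle through `C` contains an accepting
transition, or no cycle through `C` does. -/
def InherentlyWeak (M : NBA Q A) (C : Set Q) : Prop :=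
  (∀ n p u, M.IsCycle C n p u → M.CycleHasAcc n p u) ∨
  (∀ n p u, M.IsCycle C n p u → ¬ M.CycleHasAcc n p u)

/-- `δ(S, a)`, the set of successors of states of `S` under letter `a`. -/
def stepSet (M : NBA Q A) (S : Set Q) (a : A) : Set Q :=
  {q' | ∃ q ∈ S, q' ∈ M.trans q a}

/-- `S_ℓ`: the set of states reached at level `ℓ` of the run DAG of `M` over `w`. -/
def reachSet (M : NBA Q A) (w : ℕ → A) : ℕ → Set Q
  | 0 => {M.init}
  | ℓ + 1 => M.stepSet (M.reachSet w ℓ) (w ℓ)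

/-- `W`: the union of the inherently weak SCCs. -/
def weakStates (M : NBA Q A) : Set Q :=
  {q | ∃ C : Set Q, M.IsSCC C ∧ M.InherentlyWeak C ∧ q ∈ C}

/-- `WA`: the union of the accepting inherently weak SCCs. -/
def weakAccStates (M : NBA Q A) : Set Q :=
  {q | ∃ C : Set Q, M.IsSCC C ∧ M.InherentlyWeak C ∧ M.AccSCC C ∧ q ∈ C}

/-- The sequence `(P_ℓ, O_ℓ)` of the inherently-weak-SCC construction of `M` over `w`. -/
noncomputable def weakSeq (M : NBA Q A) (w : ℕ → A) : ℕ → Set Q × Set Q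
  | 0 => ({M.init} ∩ M.weakStates, ∅)
  | ℓ + 1 =>
      (M.reachSet w (ℓ + 1) ∩ M.weakStates,
        if (M.weakSeq w ℓ).2 = ∅ then
          (M.reachSet w (ℓ + 1) ∩ M.weakStates) ∩ M.weakAccStates
        else M.stepSet (M.weakSeq w ℓ).2 (w ℓ) ∩ M.weakAccStates)

end NBA

/-!
A run of a finite automaton eventually stays in the SCC of a state it visits infinitely often;
as that SCC is inherently weak, the run is accepting iff it eventually stays in `WA`. If some
run stays in `WA` from level `T` on, then from the first breakpoint (`O_ℓ = ∅`) beyond `T` on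
this run is tracked by `O`, so there are no further breakpoints. Conversely, if `O_ℓ ≠ ∅`
from some level on, every state of `O_{ℓ+1}` has a predecessor in `O_ℓ`, and König's lemma
yields an infinite run that ends inside `WA`. Finally `O_ℓ ⊆ P_ℓ`, so a pair `(P_ℓ, O_ℓ)` is
a map `Q → Fin 3`.
-/

section Konig

variable {α : Type*}

theorem exists_forall_of_forall_exists_antitone [Finite α] {R : ℕ → α → Prop}
    (hR : ∀ a, Antitone (R · a)) (h : ∀ m, ∃ a, R m a) : ∃ a, ∀ m, R m a := by
  by_contra! hc
  choose f hf using hc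
  have := Fintype.ofFinite α
  obtain ⟨a, ha⟩ := h (Finset.univ.sup f)
  exact hf a (hR a (Finset.le_sup (Finset.mem_univ a)) ha)

/-- `LevelPath L R ℓ m p`: there is an `R`-path of length `m` from `p`, sitting at level `ℓ`,
through the levels `L (ℓ + 1), …, L (ℓ + m)`. -/
def LevelPath (L : ℕ → Set α) (R : ℕ → α → α → Prop) : ℕ → ℕ → α → Prop
  | _, 0, _ => True
  | ℓ, m + 1, p => ∃ q ∈ L (ℓ + 1), R ℓ p q ∧ LevelPath L R (ℓ + 1) m q

variable {L : ℕ → Set α} {R : ℕ → α → α → Prop}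

theorem LevelPath.mono {ℓ m m' : ℕ} {p : α} (h : LevelPath L R ℓ m' p) (hm : m ≤ m') :
    LevelPath L R ℓ m p := by
  induction m generalizing ℓ m' p with
  | zero => trivial
  | succ m ih =>
    obtain ⟨m', rfl⟩ := Nat.exists_eq_add_of_lt hm
    obtain ⟨q, hq, hpq, hpath⟩ := h
    exact ⟨q, hq, hpq, ih hpath (by omega)⟩

theorem exists_levelPath_of_mem (hpred : ∀ ℓ, ∀ q ∈ L (ℓ + 1), ∃ p ∈ L ℓ, R ℓ p q)
    {ℓ m : ℕ} {q : α} (hq : q ∈ L (ℓ + m)) : ∃ p ∈ L ℓ, LevelPath L R ℓ m p := by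
  induction m generalizing ℓ with
  | zero => exact ⟨q, hq, trivial⟩
  | succ m ih =>
    obtain ⟨q₁, hq₁, hpath⟩ := ih (ℓ := ℓ + 1) (by rwa [Nat.add_right_comm])
    obtain ⟨p, hp, hpq₁⟩ := hpred ℓ q₁ hq₁
    exact ⟨p, hp, q₁, hq₁, hpq₁, hpath⟩

/-- König's lemma. -/
theorem exists_seq_mem_of_forall_exists_pred [Finite α]
    (hne : ∀ m, ∃ n ≥ m, (L n).Nonempty)
    (hpred : ∀ ℓ, ∀ q ∈ L (ℓ + 1), ∃ p ∈ L ℓ, R ℓ p q) :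
    ∃ ρ : ℕ → α, ∀ ℓ, ρ ℓ ∈ L ℓ ∧ R ℓ (ρ ℓ) (ρ (ℓ + 1)) := by
  let Good (ℓ : ℕ) (p : α) : Prop := p ∈ L ℓ ∧ ∀ m, LevelPath L R ℓ m p
  have antitone_in_length (ℓ : ℕ) (P : α → Prop) (p : α) :
      Antitone fun m => P p ∧ LevelPath L R ℓ m p :=
    fun _ _ hm h => ⟨h.1, h.2.mono hm⟩
  have good_zero : ∃ p, Good 0 p := by
    have h : ∀ m, ∃ p, p ∈ L 0 ∧ LevelPath L R 0 m p := by
      intro m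
      obtain ⟨n, hnm, q, hq⟩ := hne m
      obtain ⟨p, hp, hpath⟩ := exists_levelPath_of_mem hpred (ℓ := 0) (by rwa [Nat.zero_add])
      exact ⟨p, hp, hpath.mono hnm⟩
    obtain ⟨p, hp⟩ := exists_forall_of_forall_exists_antitone (antitone_in_length 0 _) h
    exact ⟨p, (hp 0).1, fun m => (hp m).2⟩
  have good_succ : ∀ ℓ p, Good ℓ p → ∃ q, R ℓ p q ∧ Good (ℓ + 1) q := by
    intro ℓ p hp
    have h : ∀ m, ∃ q, (q ∈ L (ℓ + 1) ∧ R ℓ p q) ∧ LevelPath L R (ℓ + 1) m q := by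
      intro m
      obtain ⟨q, hq, hpq, hpath⟩ := hp.2 (m + 1)
      exact ⟨q, ⟨hq, hpq⟩, hpath⟩
    obtain ⟨q, hq⟩ := exists_forall_of_forall_exists_antitone (antitone_in_length (ℓ + 1) _) h
    exact ⟨q, (hq 0).1.2, (hq 0).1.1, fun m => (hq m).2⟩
  obtain ⟨p₀, hp₀⟩ := good_zero
  choose! next hnext using good_succ
  let ρ (n : ℕ) : α := Nat.rec (motive := fun _ => α) p₀ next n
  have hgood : ∀ ℓ, Good ℓ (ρ ℓ) := fun ℓ => by
    induction ℓ with
    | zero => exact hp₀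
    | succ ℓ ih => exact (hnext ℓ _ ih).2
  exact ⟨ρ, fun ℓ => ⟨(hgood ℓ).1, (hnext ℓ _ (hgood ℓ)).1⟩⟩

end Konig

theorem Set.ncard_le_three_pow_of_forall_snd_subset_fst {Q : Type*} [Finite Q]
    (s : Set (Set Q × Set Q)) (hs : ∀ x ∈ s, x.2 ⊆ x.1) : s.ncard ≤ 3 ^ Nat.card Q := by
  let code (x : Set Q × Set Q) (q : Q) : Fin 3 :=
    if q ∈ x.2 then 2 else if q ∈ x.1 then 1 else 0
  have hmem (x : Set Q × Set Q) (hx : x ∈ s) (q : Q) :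
      (q ∈ x.1 ↔ code x q ≠ 0) ∧ (q ∈ x.2 ↔ code x q = 2) := by
    have := @hs x hx q
    by_cases q ∈ x.1 <;> by_cases q ∈ x.2 <;> simp_all [code]
  have hcode : Set.InjOn code s := fun x hx y hy hxy => by
    ext q
    · rw [(hmem x hx q).1, (hmem y hy q).1, hxy]
    · rw [(hmem x hx q).2, (hmem y hy q).2, hxy]
  calc s.ncard = (code '' s).ncard := (hcode.ncard_image).symm
    _ ≤ Nat.card (Q → Fin 3) := Set.ncard_le_card _
    _ = 3 ^ Nat.card Q := by simp [Nat.card_fun]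

namespace NBA

variable {Q A : Type} {M : NBA Q A}

def sccOf (M : NBA Q A) (q : Q) : Set Q :=
  {p | M.Reach q p ∧ M.Reach p q}

theorem mem_sccOf_self (M : NBA Q A) (q : Q) : q ∈ M.sccOf q :=
  ⟨.refl, .refl⟩

theorem isSCC_sccOf (M : NBA Q A) (q : Q) : M.IsSCC (M.sccOf q) := by
  refine ⟨fun x hx y hy => ⟨hx.2.trans hy.1, hy.2.trans hx.1⟩, fun C hsub hC => ?_⟩
  have hq : q ∈ C := hsub (M.mem_sccOf_self q)
  exact subset_antisymm (fun p hp => hC q hq p hp) hsub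

theorem IsSCC.eq_sccOf {C : Set Q} {q : Q} (hC : M.IsSCC C) (hq : q ∈ C) : C = M.sccOf q :=
  (hC.2 _ (fun p hp => hC.1 q hq p hp) (M.isSCC_sccOf q).1).symm

theorem weakStates_eq_univ (hweak : ∀ C : Set Q, M.IsSCC C → M.InherentlyWeak C) :
    M.weakStates = Set.univ :=
  Set.eq_univ_of_forall fun q =>
    ⟨_, M.isSCC_sccOf q, hweak _ (M.isSCC_sccOf q), M.mem_sccOf_self q⟩

theorem weakAccStates_subset_weakStates : M.weakAccStates ⊆ M.weakStates :=
  fun _ ⟨C, hC, hweak, _, hq⟩ => ⟨C, hC, hweak, hq⟩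

theorem IsSCC.exists_path [Nonempty A] {C : Set Q} {x y : Q} (hC : M.IsSCC C) (hx : x ∈ C) (hy : y ∈ C)
    (h : M.Reach x y) : ∃ (n : ℕ) (p : ℕ → Q) (u : ℕ → A), p 0 = x ∧ p n = y ∧
      ∀ i < n, p i ∈ C ∧ p (i + 1) ∈ C ∧ p (i + 1) ∈ M.trans (p i) (u i) := by
  induction h using Relation.ReflTransGen.head_induction_on with
  | refl => exact ⟨0, fun _ => y, fun _ => Classical.arbitrary A, rfl, rfl, by simp⟩
  | @head x s hxs hsy ih =>
    obtain ⟨a, ha⟩ := hxs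
    have hs : s ∈ C := by
      rw [hC.eq_sccOf hx]
      exact ⟨.single ⟨a, ha⟩, hsy.trans (hC.1 y hy x hx).1⟩
    obtain ⟨n, p, u, rfl, hpn, hpath⟩ := ih hs
    refine ⟨n + 1, Stream'.cons x p, Stream'.cons a u, rfl, hpn, ?_⟩
    rintro (_ | i) hi
    · exact ⟨hx, hs, ha⟩
    · exact hpath i (by omega)

theorem IsSCC.cycleHasAcc {C : Set Q} (hC : M.IsSCC C) (hweak : M.InherentlyWeak C)
    (hacc : M.AccSCC C) {n : ℕ} {p : ℕ → Q} {u : ℕ → A} (hcyc : M.IsCycle C n p u) :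
    M.CycleHasAcc n p u := by
  refine hweak.resolve_right (fun hnone => ?_) n p u hcyc
  obtain ⟨q, hq, a, q', hq', hqq'⟩ := hacc
  have : Nonempty A := ⟨a⟩
  obtain ⟨m, r, v, rfl, hrm, hpath⟩ := hC.exists_path hq' hq (hC.1 q' hq' q hq).1
  refine hnone (m + 1) (Stream'.cons q r) (Stream'.cons a v) ⟨by omega, hrm, ?_⟩ ⟨0, by omega, hqq'⟩
  rintro (_ | i) hi
  · exact ⟨hq, hq', M.acc_sub _ hqq'⟩
  · exact hpath i (by omega)

variable {w : ℕ → A} {ρ : ℕ → Q}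

theorem reach_of_le (hρ : ∀ ℓ, ρ (ℓ + 1) ∈ M.trans (ρ ℓ) (w ℓ)) {m k : ℕ} (h : m ≤ k) :
    M.Reach (ρ m) (ρ k) := by
  induction k, h using Nat.le_induction with
  | base => exact .refl
  | succ k _ ih => exact ih.tail ⟨w k, hρ k⟩

theorem IsRun.mem_reachSet (hρ : M.IsRun w ρ) (ℓ : ℕ) : ρ ℓ ∈ M.reachSet w ℓ := by
  induction ℓ with
  | zero => exact hρ.1
  | succ ℓ ih => exact ⟨ρ ℓ, ih, hρ.2 ℓ⟩

theorem exists_recurrent_eventually_mem_sccOf [Finite Q]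
    (hρ : ∀ ℓ, ρ (ℓ + 1) ∈ M.trans (ρ ℓ) (w ℓ)) :
    ∃ q T, (∀ n, ∃ k ≥ n, ρ k = q) ∧ ∀ ℓ ≥ T, ρ ℓ ∈ M.sccOf q := by
  obtain ⟨q, hq⟩ := Finite.exists_infinite_fiber ρ
  have hrec (n : ℕ) : ∃ k ≥ n, ρ k = q := by
    obtain ⟨k, hk, hnk⟩ := (Set.infinite_coe_iff.mp hq).exists_gt n
    exact ⟨k, hnk.le, hk⟩
  obtain ⟨T, -, rfl⟩ := hrec 0
  refine ⟨ρ T, T, hrec, fun ℓ hℓ => ⟨reach_of_le hρ hℓ, ?_⟩⟩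
  obtain ⟨k, hk, hkT⟩ := hrec ℓ
  exact hkT ▸ reach_of_le hρ hk

theorem IsAcceptingRun.eventually_mem_weakAccStates [Finite Q]
    (hweak : ∀ C : Set Q, M.IsSCC C → M.InherentlyWeak C) (hρ : M.IsAcceptingRun w ρ) :
    ∃ T, ∀ ℓ ≥ T, ρ ℓ ∈ M.weakAccStates := by
  obtain ⟨q, T, -, hT⟩ := exists_recurrent_eventually_mem_sccOf hρ.1.2
  obtain ⟨ℓ, hℓ, hacc⟩ := hρ.2 T
  have hCacc : M.AccSCC (M.sccOf q) := ⟨ρ ℓ, hT ℓ hℓ, w ℓ, ρ (ℓ + 1), hT _ (by omega), hacc⟩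
  exact ⟨T, fun k hk => ⟨_, M.isSCC_sccOf q, hweak _ (M.isSCC_sccOf q), hCacc, hT k hk⟩⟩

theorem IsRun.isAcceptingRun_of_eventually_mem_weakAccStates [Finite Q] {N : ℕ}
    (hρ : M.IsRun w ρ) (hWA : ∀ ℓ ≥ N, ρ ℓ ∈ M.weakAccStates) : M.IsAcceptingRun w ρ := by
  obtain ⟨q, T, hrec, hT⟩ := exists_recurrent_eventually_mem_sccOf hρ.2
  obtain ⟨C, hC, hweak, hacc, hmem⟩ := hWA (max N T) (le_max_left _ _)
  have hCq : C = M.sccOf q :=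
    (hC.eq_sccOf hmem).trans ((M.isSCC_sccOf q).eq_sccOf (hT _ (le_max_right _ _))).symm
  refine ⟨hρ, fun n => ?_⟩
  obtain ⟨k₁, hk₁, hq₁⟩ := hrec (max n T)
  obtain ⟨k₂, hk₂, hq₂⟩ := hrec (k₁ + 1)
  have hcyc : M.IsCycle C (k₂ - k₁) (fun i => ρ (k₁ + i)) (fun i => w (k₁ + i)) := by
    refine ⟨by omega, by simp [Nat.add_sub_cancel' (by omega : k₁ ≤ k₂), hq₁, hq₂], ?_⟩
    intro i _
    exact ⟨hCq ▸ hT _ (by omega), hCq ▸ hT _ (by omega), hρ.2 _⟩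
  obtain ⟨i, -, hi⟩ := hC.cycleHasAcc hweak hacc hcyc
  exact ⟨k₁ + i, by omega, hi⟩

theorem weakSeq_snd_succ_of_eq_empty {ℓ : ℕ} (h : (M.weakSeq w ℓ).2 = ∅) :
    (M.weakSeq w (ℓ + 1)).2 = M.reachSet w (ℓ + 1) ∩ M.weakStates ∩ M.weakAccStates :=
  if_pos h

theorem weakSeq_snd_succ_of_ne_empty {ℓ : ℕ} (h : (M.weakSeq w ℓ).2 ≠ ∅) :
    (M.weakSeq w (ℓ + 1)).2 = M.stepSet (M.weakSeq w ℓ).2 (w ℓ) ∩ M.weakAccStates :=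
  if_neg h

theorem weakSeq_snd_subset (ℓ : ℕ) :
    (M.weakSeq w ℓ).2 ⊆ M.reachSet w ℓ ∩ M.weakAccStates := by
  induction ℓ with
  | zero => exact Set.empty_subset _
  | succ ℓ ih =>
    by_cases h : (M.weakSeq w ℓ).2 = ∅
    · rw [weakSeq_snd_succ_of_eq_empty h]
      exact fun q hq => ⟨hq.1.1, hq.2⟩
    · rw [weakSeq_snd_succ_of_ne_empty h]
      rintro q ⟨⟨p, hp, hpq⟩, hq⟩
      exact ⟨⟨p, (ih hp).1, hpq⟩, hq⟩

theorem weakSeq_snd_subset_fst (ℓ : ℕ) : (M.weakSeq w ℓ).2 ⊆ (M.weakSeq w ℓ).1 := by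
  cases ℓ with
  | zero => exact Set.empty_subset _
  | succ ℓ =>
    intro q hq
    obtain ⟨hS, hWA⟩ := weakSeq_snd_subset (ℓ + 1) hq
    exact ⟨hS, weakAccStates_subset_weakStates hWA⟩

theorem ncard_range_weakSeq_le [Finite Q] (w : ℕ → A) :
    (Set.range (M.weakSeq w)).ncard ≤ 3 ^ Nat.card Q :=
  Set.ncard_le_three_pow_of_forall_snd_subset_fst _ <| by
    rintro _ ⟨ℓ, rfl⟩
    exact weakSeq_snd_subset_fst ℓ

theorem IsRun.mem_weakSeq_snd_of_eq_empty (hρ : M.IsRun w ρ) {ℓ : ℕ}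
    (hWA : ∀ k > ℓ, ρ k ∈ M.weakAccStates) (h : (M.weakSeq w ℓ).2 = ∅) :
    ∀ m > ℓ, ρ m ∈ (M.weakSeq w m).2 := by
  intro m hm
  induction m, hm using Nat.le_induction with
  | base =>
    rw [weakSeq_snd_succ_of_eq_empty h]
    have hρWA := hWA (ℓ + 1) (by omega)
    exact ⟨⟨hρ.mem_reachSet _, weakAccStates_subset_weakStates hρWA⟩, hρWA⟩
  | succ m hm ih =>
    rw [weakSeq_snd_succ_of_ne_empty (Set.nonempty_iff_ne_empty.mp ⟨_, ih⟩)]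
    exact ⟨⟨ρ m, ih, hρ.2 m⟩, hWA _ (by omega)⟩

theorem IsRun.finite_setOf_weakSeq_snd_eq_empty (hρ : M.IsRun w ρ) {T : ℕ}
    (hWA : ∀ ℓ ≥ T, ρ ℓ ∈ M.weakAccStates) :
    {ℓ | (M.weakSeq w ℓ).2 = ∅}.Finite := by
  by_cases h : ∃ ℓ ≥ T, (M.weakSeq w ℓ).2 = ∅
  · obtain ⟨ℓ, hℓ, hO⟩ := h
    refine (Set.finite_Iic ℓ).subset fun m (hm : _ = ∅) => Set.mem_Iic.mpr ?_
    by_contra! hlt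
    have := hρ.mem_weakSeq_snd_of_eq_empty (fun k hk => hWA k (by omega)) hO m hlt
    simp [hm] at this
  · push Not at h
    exact (Set.finite_Iio T).subset fun m hm =>
      Set.mem_Iio.mpr (by_contra fun hmT => (h m (not_lt.mp hmT)).ne_empty hm)

theorem exists_run_eventually_mem_weakAccStates [Finite Q]
    (hfin : {ℓ | (M.weakSeq w ℓ).2 = ∅}.Finite) :
    ∃ ρ N, M.IsRun w ρ ∧ ∀ ℓ ≥ N, ρ ℓ ∈ M.weakAccStates := by
  obtain ⟨B, hB⟩ := hfin.bddAbove
  have hO (ℓ : ℕ) (hℓ : B < ℓ) : (M.weakSeq w ℓ).2 ≠ ∅ := fun h => absurd (hB h) (by omega)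
  -- the run DAG up to level `B`, followed by the sets `O_ℓ`
  let L (ℓ : ℕ) : Set Q := {q ∈ M.reachSet w ℓ | B < ℓ → q ∈ (M.weakSeq w ℓ).2}
  have hne (m : ℕ) : ∃ n ≥ m, (L n).Nonempty := by
    obtain ⟨q, hq⟩ := Set.nonempty_iff_ne_empty.mpr (hO (max m (B + 1)) (by omega))
    exact ⟨_, le_max_left _ _, q, (weakSeq_snd_subset _ hq).1, fun _ => hq⟩
  have hpred (ℓ : ℕ) : ∀ q ∈ L (ℓ + 1), ∃ p ∈ L ℓ, q ∈ M.trans p (w ℓ) := by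
    rintro q ⟨hqS, hqO⟩
    by_cases hℓ : B < ℓ
    · have hq := hqO (by omega)
      rw [weakSeq_snd_succ_of_ne_empty (hO ℓ hℓ)] at hq
      obtain ⟨⟨p, hp, hpq⟩, -⟩ := hq
      exact ⟨p, ⟨(weakSeq_snd_subset ℓ hp).1, fun _ => hp⟩, hpq⟩
    · obtain ⟨p, hp, hpq⟩ := hqS
      exact ⟨p, ⟨hp, fun h => absurd h hℓ⟩, hpq⟩
  obtain ⟨ρ, hρ⟩ := exists_seq_mem_of_forall_exists_pred hne hpred
  refine ⟨ρ, B + 1, ⟨(hρ 0).1.1, fun ℓ => (hρ ℓ).2⟩, fun ℓ hℓ => ?_⟩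
  exact (weakSeq_snd_subset ℓ ((hρ ℓ).1.2 (by omega))).2

end NBA

theorem weak_nba_determinization_general {Q A : Type} [Finite Q]
    (M : NBA Q A) (hweak : ∀ C : Set Q, M.IsSCC C → M.InherentlyWeak C) :
    M.weakStates = Set.univ ∧
    (∀ w : ℕ → A, M.InLanguage w ↔ {ℓ : ℕ | (M.weakSeq w ℓ).2 = ∅}.Finite) ∧
    (∀ w : ℕ → A, (Set.range (M.weakSeq w)).ncard ≤ 3 ^ Nat.card Q) := by
  refine ⟨NBA.weakStates_eq_univ hweak, fun w => ⟨?_, ?_⟩, NBA.ncard_range_weakSeq_le⟩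
  · rintro ⟨ρ, hρ⟩
    obtain ⟨T, hT⟩ := hρ.eventually_mem_weakAccStates hweak
    exact hρ.1.finite_setOf_weakSeq_snd_eq_empty hT
  · intro hfin
    obtain ⟨ρ, N, hρ, hN⟩ := NBA.exists_run_eventually_mem_weakAccStates hfin
    exact ⟨ρ, hρ.isAcceptingRun_of_eventually_mem_weakAccStates hN⟩

/-- For a weak Büchi automaton `M` (every SCC is inherently weak,
so `W = Q`), a word `w` is in `L(M)` iff in the inherently-weak-SCC construction
`O_ℓ = ∅` for only finitely many `ℓ`; moreover at most `3 ^ |Q|` distinct pairs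
`(P_ℓ, O_ℓ)` occur, so this yields an equivalent deterministic automaton with at
most `3 ^ |Q|` states. -/
theorem weak_nba_determinization {Q A : Type} [Finite Q] [Finite A]
    (M : NBA Q A) (hweak : ∀ C : Set Q, M.IsSCC C → M.InherentlyWeak C) :
    M.weakStates = Set.univ ∧
    (∀ w : ℕ → A, M.InLanguage w ↔ {ℓ : ℕ | (M.weakSeq w ℓ).2 = ∅}.Finite) ∧
    (∀ w : ℕ → A, (Set.range (M.weakSeq w)).ncard ≤ 3 ^ Nat.card Q) :=
  weak_nba_determinization_general M hweak
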